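/- arXiv:1509.08896 — 5 statements merged into one kernel-verified Lean document; each statement's English description precedes it below -/
import Mathlib

section
/- Let G be a nontrivial finite abelian group with Davenport-type constant d(G), meaning: for all n > d(G) and all g_1,…,g_n ∈ G, the equation Σ x_i g_i = 0 has a solution x ∈ {0,1}^n with x ≠ 0. Then for any g_1,…,g_n ∈ G, the number of x ∈ {0,1}^n with Σ_{i=1}^n x_i g_i = 0 is at least 2^n / Σ_{k=0}^{d(G)} C(n,k), which is at least 2^{n − (d(G)+1)·log₂ n} when n ≥ 2. -/
/-!
Identify `x ∈ {0,1}^n` with its support `A ⊆ [n]`. Repeatedly deleting a nonempty zero-sum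
subset (which exists while more than `d` elements remain) shrinks any `A` to some `B ⊆ A` with
`|B| ≤ d` and the same sum, so `A \ B` is a zero-sum set. Since `A ↦ (A \ B, B)` is injective,
`2^n ≤ #{zero-sum sets} · #{sets of size ≤ d}`. The second bound follows from
`∑_{k ≤ d} C(n,k) ≤ ∑_{k ≤ d} n^k < n^(d+1)`.
-/

open Finset

def finTwoFunEquivFinset (ι : Type*) [DecidableEq ι] [Fintype ι] : (ι → Fin 2) ≃ Finset ι where
  toFun x := {i | x i = 1}
  invFun A i := if i ∈ A then 1 else 0
  left_inv x := funext fun i => by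
    simp only [mem_filter, mem_univ, true_and]
    generalize x i = a
    fin_cases a <;> simp
  right_inv A := by ext; simp

section SubsetSums

variable {ι G : Type*}

lemma sum_finTwo_smul_eq_sum_filter [AddCommMonoid G] [Fintype ι] (x : ι → Fin 2) (g : ι → G) :
    ∑ i, ((x i : ℕ) • g i) = ∑ i with x i = 1, g i := by
  rw [sum_filter]
  refine sum_congr rfl fun i _ => ?_
  generalize x i = a
  fin_cases a <;> simp

lemma card_filter_sum_finTwo_smul_eq_zero [DecidableEq ι] [Fintype ι] [AddCommMonoid G]
    [DecidableEq G] (g : ι → G) :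
    #{x : ι → Fin 2 | ∑ i, ((x i : ℕ) • g i) = 0} = #{A : Finset ι | ∑ i ∈ A, g i = 0} :=
  card_equiv (finTwoFunEquivFinset ι) fun x => by
    simp [sum_finTwo_smul_eq_sum_filter, finTwoFunEquivFinset]

lemma exists_nonempty_zero_sum_subset [AddCommMonoid G] {d : ℕ}
    (hd : ∀ N, N > d → ∀ g : Fin N → G, ∃ x : Fin N → Fin 2, x ≠ 0 ∧
      ∑ i, ((x i : ℕ) • g i) = 0)
    (g : ι → G) {A : Finset ι} (hA : d < #A) :
    ∃ T ⊆ A, T.Nonempty ∧ ∑ i ∈ T, g i = 0 := by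
  let e : Fin #A ↪ ι := A.equivFin.symm.toEmbedding.trans (Function.Embedding.subtype _)
  obtain ⟨x, hx0, hx⟩ := hd #A hA (g ∘ e)
  refine ⟨(univ.filter fun i => x i = 1).map e, ?_, ?_, ?_⟩
  · simp [subset_iff, e]
  · obtain ⟨i, hi⟩ := Function.ne_iff.mp hx0
    exact ⟨e i, mem_map_of_mem e (mem_filter.mpr ⟨mem_univ i, Fin.eq_one_of_ne_zero _ hi⟩)⟩
  · rwa [sum_map, ← sum_finTwo_smul_eq_sum_filter]

lemma exists_subset_card_le_sum_eq [DecidableEq ι] [AddCommMonoid G] {d : ℕ} (g : ι → G)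
    (hzs : ∀ A : Finset ι, d < #A → ∃ T ⊆ A, T.Nonempty ∧ ∑ i ∈ T, g i = 0)
    (A : Finset ι) : ∃ B ⊆ A, #B ≤ d ∧ ∑ i ∈ B, g i = ∑ i ∈ A, g i := by
  induction A using strongInduction with
  | H A ih =>
    by_cases hA : #A ≤ d
    · exact ⟨A, Subset.rfl, hA, rfl⟩
    obtain ⟨T, hTA, hT, hT0⟩ := hzs A (not_le.mp hA)
    obtain ⟨B, hB, hBd, hBsum⟩ := ih (A \ T) (sdiff_ssubset hTA hT)
    refine ⟨B, hB.trans sdiff_subset, hBd, ?_⟩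
    rw [hBsum, ← sum_sdiff hTA, hT0, add_zero]

lemma two_pow_card_le_card_zero_sum_mul [DecidableEq ι] [Fintype ι] [AddCommGroup G]
    [DecidableEq G] {d : ℕ} (g : ι → G)
    (hzs : ∀ A : Finset ι, d < #A → ∃ T ⊆ A, T.Nonempty ∧ ∑ i ∈ T, g i = 0) :
    2 ^ Fintype.card ι ≤ #{A : Finset ι | ∑ i ∈ A, g i = 0} * #{C : Finset ι | #C ≤ d} := by
  choose B hBA hBd hBsum using exists_subset_card_le_sum_eq g hzs
  rw [← Fintype.card_finset, ← card_univ, ← card_product]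
  refine card_le_card_of_injOn (fun A => (A \ B A, B A)) (fun A _ => ?_) fun A₁ _ A₂ _ h => ?_
  · simp [hBd, sum_sdiff_eq_sub (hBA A), hBsum]
  · simp only [Prod.mk.injEq] at h
    rw [← sdiff_union_of_subset (hBA A₁), ← sdiff_union_of_subset (hBA A₂), h.1, h.2]

lemma card_filter_card_le (ι : Type*) [Fintype ι] (d : ℕ) :
    #{C : Finset ι | #C ≤ d} = ∑ k ∈ range (d + 1), (Fintype.card ι).choose k := by
  rw [card_eq_sum_card_fiberwise (f := card) (t := range (d + 1))
    fun C hC => by simpa [Nat.lt_succ_iff] using hC]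
  refine sum_congr rfl fun k _ => ?_
  rw [← card_univ, ← card_powersetCard]
  congr 1
  ext C
  simp only [mem_filter, mem_univ, true_and, mem_powersetCard, subset_univ]
  grind

end SubsetSums

lemma sum_range_choose_pos (n d : ℕ) : 0 < ∑ k ∈ range (d + 1), n.choose k := by
  rw [sum_range_succ']
  simp

lemma sum_range_choose_lt_pow {n : ℕ} (hn : 2 ≤ n) (d : ℕ) :
    ∑ k ∈ range (d + 1), n.choose k < n ^ (d + 1) :=
  (sum_le_sum fun k _ => Nat.choose_le_pow n k).trans_lt
    (Nat.geomSum_lt hn fun _ => mem_range.mp)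

lemma Real.rpow_sub_mul_logb {b x : ℝ} (hb : 0 < b) (hb₁ : b ≠ 1) (hx : 0 < x) (y c : ℝ) :
    b ^ (y - c * logb b x) = b ^ y / x ^ c := by
  rw [rpow_sub hb, mul_comm, rpow_mul hb.le, rpow_logb hb hb₁ hx]

theorem davenport_solution_count_general (G : Type*) [AddCommGroup G] [DecidableEq G]
    (d : ℕ)
    (hd : ∀ N, N > d → ∀ g : Fin N → G, ∃ x : Fin N → Fin 2, x ≠ 0 ∧
      ∑ i, ((x i : ℕ) • g i) = 0)
    (n : ℕ) (g : Fin n → G) :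
    ((Finset.univ.filter fun x : Fin n → Fin 2 =>
        ∑ i, ((x i : ℕ) • g i) = 0).card : ℝ)
      ≥ 2 ^ n / ∑ k ∈ Finset.range (d + 1), (n.choose k : ℝ) ∧
    (2 ≤ n → (2 : ℝ) ^ n / ∑ k ∈ Finset.range (d + 1), (n.choose k : ℝ)
      ≥ (2 : ℝ) ^ ((n : ℝ) - (d + 1) * Real.logb 2 n)) := by
  have hS : (0 : ℝ) < ∑ k ∈ range (d + 1), (n.choose k : ℝ) := by
    exact_mod_cast sum_range_choose_pos n d
  constructor
  · have key := two_pow_card_le_card_zero_sum_mul g fun A => exists_nonempty_zero_sum_subset hd g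
    rw [card_filter_card_le, Fintype.card_fin] at key
    rw [card_filter_sum_finTwo_smul_eq_zero, ge_iff_le, div_le_iff₀ hS]
    exact_mod_cast key
  · intro hn
    have hn₀ : (0 : ℝ) < n := by positivity
    rw [ge_iff_le, Real.rpow_sub_mul_logb two_pos (by norm_num) hn₀, Real.rpow_natCast,
      ← Nat.cast_succ, Real.rpow_natCast]
    exact div_le_div_of_nonneg_left (by positivity) hS
      (by exact_mod_cast (sum_range_choose_lt_pow hn d).le)

theorem davenport_solution_count (G : Type*) [AddCommGroup G] [Fintype G] [Nontrivial G] [DecidableEq G]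
    (d : ℕ)
    (hd : ∀ N, N > d → ∀ g : Fin N → G, ∃ x : Fin N → Fin 2, x ≠ 0 ∧
      ∑ i, ((x i : ℕ) • g i) = 0)
    (n : ℕ) (g : Fin n → G) :
    ((Finset.univ.filter fun x : Fin n → Fin 2 =>
        ∑ i, ((x i : ℕ) • g i) = 0).card : ℝ)
      ≥ 2 ^ n / ∑ k ∈ Finset.range (d + 1), (n.choose k : ℝ) ∧
    (2 ≤ n → (2 : ℝ) ^ n / ∑ k ∈ Finset.range (d + 1), (n.choose k : ℝ)
      ≥ (2 : ℝ) ^ ((n : ℝ) - (d + 1) * Real.logb 2 n)) :=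
  davenport_solution_count_general G d hd n g
end

section
/- Let G be a finite abelian group with the property that for all N > d and all h_1,…,h_N ∈ G, the equation Σ x_i h_i = 0 has a nonzero solution x ∈ {0,1}^N. Then for g_1,…,g_n ∈ G, every point y ∈ {0,1}^n is within Hamming distance d of some solution x ∈ {0,1}^n of Σ x_i g_i = 0, provided at least one solution exists (e.g. x = 0). -/
open Finset

private lemma fin2_cases (a : Fin 2) : a = 0 ∨ a = 1 := by omega

private lemma fin2_flip {a b : Fin 2} (h : a ≠ b) : 1 - a = b := by
  rcases fin2_cases a with ha | ha <;> rcases fin2_cases b with hb | hb <;>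
    subst ha <;> subst hb <;> simp_all

theorem solution_in_every_ball (G : Type*) [AddCommGroup G] [Fintype G]
    (d : ℕ)
    (hd : ∀ N, N > d → ∀ h : Fin N → G, ∃ x : Fin N → Fin 2, x ≠ 0 ∧
      ∑ i, ((x i : ℕ) • h i) = 0)
    (n : ℕ) (g : Fin n → G)
    (hsol : ∃ x : Fin n → Fin 2, ∑ i, ((x i : ℕ) • g i) = 0) :
    ∀ y : Fin n → Fin 2, ∃ x : Fin n → Fin 2,
      ∑ i, ((x i : ℕ) • g i) = 0 ∧ hammingDist x y ≤ d := by
  intro y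
  obtain ⟨x0, hx0⟩ := hsol
  suffices H : ∀ k, ∀ x : Fin n → Fin 2, (∑ i, ((x i : ℕ) • g i) = 0) →
      hammingDist x y = k → ∃ x' : Fin n → Fin 2,
      (∑ i, ((x' i : ℕ) • g i) = 0) ∧ hammingDist x' y ≤ d by
    exact H _ x0 hx0 rfl
  intro k
  induction k using Nat.strong_induction_on with
  | _ k ih =>
  intro x hx hk
  by_cases hdk : k ≤ d
  · exact ⟨x, hx, hk ▸ hdk⟩
  push_neg at hdk
  -- the set of disagreement
  set D : Finset (Fin n) := {i | x i ≠ y i} with hD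
  have hDcard : D.card = k := hk
  have hN : D.card > d := hDcard ▸ hdk
  set e := D.orderIsoOfFin rfl with he
  set δ : Fin n → G := fun i => if x i = 0 then g i else - g i with hδ
  obtain ⟨z, hz0, hzsum⟩ := hd D.card hN (fun j => δ (e j))
  set S : Finset (Fin D.card) := {j | z j = 1} with hS
  set T : Finset (Fin n) := S.image (fun j => (e j : Fin n)) with hT
  have hTD : T ⊆ D := by
    intro i hi
    simp only [hT, mem_image] at hi
    obtain ⟨j, _, rfl⟩ := hi
    exact (e j).2
  have hTne : T.Nonempty := by
    have : ∃ j, z j ≠ 0 := Function.ne_iff.mp hz0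
    obtain ⟨j, hj⟩ := this
    have hj1 : z j = 1 := by omega
    exact ⟨e j, mem_image.mpr ⟨j, by simp [hS, hj1], rfl⟩⟩
  set x' : Fin n → Fin 2 := fun i => if i ∈ T then 1 - x i else x i with hx'
  have hsum' : ∑ i, ((x' i : ℕ) • g i) = 0 := by
    have key : ∀ i, ((x' i : ℕ)) • g i
        = ((x i : ℕ)) • g i + (if i ∈ T then δ i else 0) := by
      intro i
      by_cases hi : i ∈ T
      · rcases fin2_cases (x i) with h0 | h0 <;>
          simp [hx', hδ, hi, h0]
      · simp [hx', hi]
    rw [Finset.sum_congr rfl (fun i _ => key i), Finset.sum_add_distrib, hx,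
      zero_add, Finset.sum_ite_mem, Finset.univ_inter]
    have hinj : Set.InjOn (fun j => (e j : Fin n)) S := by
      intro a _ b _ hab
      exact e.injective (Subtype.ext hab)
    rw [hT, Finset.sum_image hinj]
    have : ∀ j : Fin D.card, ((z j : ℕ)) • δ (e j) = if z j = 1 then δ (e j) else 0 := by
      intro j
      rcases fin2_cases (z j) with h0 | h0 <;> simp [h0]
    calc ∑ j ∈ S, δ (e j) = ∑ j, if z j = 1 then δ (e j) else 0 := by
          rw [Finset.sum_filter]
      _ = ∑ j, ((z j : ℕ)) • δ (e j) := by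
          exact Finset.sum_congr rfl (fun j _ => (this j).symm)
      _ = 0 := hzsum
  have hdist : hammingDist x' y = k - T.card := by
    have hset : ({i | x' i ≠ y i} : Finset (Fin n)) = D \ T := by
      ext i
      simp only [mem_filter, mem_univ, true_and, mem_sdiff, hD]
      by_cases hi : i ∈ T
      · have hxy : x i ≠ y i := by
          have := hTD hi
          simpa [hD] using this
        simp [hx', hi, fin2_flip hxy]
      · simp [hx', hi]
    show ({i | x' i ≠ y i} : Finset (Fin n)).card = k - T.card
    rw [hset, Finset.card_sdiff_of_subset hTD, hDcard]
  have hlt : k - T.card < k := by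
    have h1 : 1 ≤ T.card := Finset.card_pos.mpr hTne
    omega
  exact ih _ hlt x' hsum' hdist
end

section
/- Let m = p^α be a prime power and let A be a matrix over Z_m whose column space (the subgroup of Z_m^k generated by its columns) has rank r, where the rank of a finite abelian p-group ∏ Z_{p^{α_i}} is the number of factors in its invariant factor decomposition. Then there exists a subset of r rows of A that generate the row space of A. -/
open Finset

/-- The rank of an additive abelian group: the minimal `r` such that it is isomorphic
to a product of `r` cyclic groups. -/
noncomputable def groupRank (G : Type*) [AddCommGroup G] : ℕ :=
  sInf {r : ℕ | ∃ c : Fin r → ℕ, Nonempty (G ≃+ ((i : Fin r) → ZMod (c i)))}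

/-- The subgroup of `ZMod m ^ k` generated by the columns of a matrix. -/
def colSpan {m k l : ℕ} (A : Matrix (Fin k) (Fin l) (ZMod m)) :
    AddSubgroup (Fin k → ZMod m) :=
  AddSubgroup.closure (Set.range fun j i => A i j)

/-- The rank of a matrix over `ZMod m`: the rank of its column space. -/
noncomputable def matrixRank {m k l : ℕ} (A : Matrix (Fin k) (Fin l) (ZMod m)) : ℕ :=
  groupRank (colSpan A)

/-!
For a finite abelian group `G` killed by `p ^ α`, the quotient `G / pG` is an `𝔽_p`-vector space
of dimension `groupRank G`, so `|G| = |pG| · p ^ groupRank G`. The row space and the column space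
of any matrix over `ZMod m` have the same order, by duality for finite `ZMod m`-modules; applied
to `A` and to `p • A`, whose spaces are `p` times those of `A`, this shows that both spaces of `A`
have the same rank `r`. Finally, rows whose images form a basis of `R / pR`, for `R` the row
space, generate a subgroup `H` with `H + pR = R`, and then `H = R` because `p` is nilpotent on `R`.
-/

theorem AddSubgroup.closure_eq_toAddSubgroup_span_zmod (n : ℕ) {M : Type*} [AddCommGroup M]
    [Module (ZMod n) M] (s : Set M) :
    closure s = (Submodule.span (ZMod n) s).toAddSubgroup :=
  le_antisymm ((closure_le _).2 Submodule.subset_span)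
    (Submodule.span_le (p := toZModSubmodule n (closure s)) |>.2 subset_closure)

section Duality

open Matrix

theorem ZMod.hasEnoughRootsOfUnity_multiplicative (m : ℕ) :
    HasEnoughRootsOfUnity (Multiplicative (ZMod m)) m where
  prim := ⟨.ofAdd 1, by
    simpa [orderOf_ofAdd_eq_addOrderOf, ZMod.addOrderOf_one] using
      IsPrimitiveRoot.orderOf (Multiplicative.ofAdd (1 : ZMod m))⟩
  cyc :=
    have : IsCyclic (Multiplicative (ZMod m))ˣ :=
      isCyclic_of_surjective toUnits.toMonoidHom toUnits.surjective
    inferInstance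

variable {m : ℕ} [NeZero m]

theorem Module.card_dual_zmod (Q : Type*) [AddCommGroup Q] [Module (ZMod m) Q] [Finite Q] :
    Nat.card (Module.Dual (ZMod m) Q) = Nat.card Q := by
  have hexp : Monoid.exponent (Multiplicative Q) ∣ m :=
    Monoid.exponent_dvd_of_forall_pow_eq_one fun x =>
      congrArg Multiplicative.ofAdd (ZModModule.char_nsmul_eq_zero m x.toAdd)
  have := ZMod.hasEnoughRootsOfUnity_multiplicative m
  have := HasEnoughRootsOfUnity.of_dvd (Multiplicative (ZMod m)) hexp
  calc Nat.card (Module.Dual (ZMod m) Q)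
      = Nat.card (Multiplicative Q →* Multiplicative (ZMod m)) :=
        Nat.card_congr ((AddMonoidHom.toZModLinearMapEquiv m).toEquiv.symm.trans
          AddMonoidHom.toMultiplicative)
    _ = Nat.card (Multiplicative Q →* (Multiplicative (ZMod m))ˣ) :=
        Nat.card_congr (MulEquiv.monoidHomCongrRightEquiv toUnits)
    _ = Nat.card Q := CommGroup.card_monoidHom_of_hasEnoughRootsOfUnity _ _

variable {ι κ : Type*} [Fintype ι] [Fintype κ]

theorem Matrix.card_ker_mulVecLin_zmod (A : Matrix ι κ (ZMod m)) :
    Nat.card (LinearMap.ker A.mulVecLin) =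
      Nat.card ((κ → ZMod m) ⧸ LinearMap.range A.vecMulLinear) := by
  classical
  have hmem : ∀ x, x ∈ LinearMap.ker A.mulVecLin ↔
      dotProductEquiv (ZMod m) κ x ∈ (LinearMap.range A.vecMulLinear).dualAnnihilator := by
    intro x
    simp only [LinearMap.mem_ker, Matrix.mulVecLin_apply, Submodule.mem_dualAnnihilator,
      LinearMap.mem_range, forall_exists_index, forall_apply_eq_imp_iff,
      Matrix.vecMulLinear_apply, dotProductEquiv_apply_apply, dotProduct_comm x,
      ← dotProduct_mulVec]
    simp_rw [dotProduct_comm _ (A *ᵥ x)]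
    exact dotProduct_eq_zero_iff.symm
  rw [Nat.card_congr ((dotProductEquiv (ZMod m) κ).toEquiv.subtypeEquiv hmem),
    ← Nat.card_congr (Submodule.dualQuotEquivDualAnnihilator _).toEquiv, Module.card_dual_zmod]

theorem Matrix.card_range_mulVecLin_zmod (A : Matrix ι κ (ZMod m)) :
    Nat.card (LinearMap.range A.mulVecLin) = Nat.card (LinearMap.range A.vecMulLinear) := by
  have : Finite ((κ → ZMod m) ⧸ LinearMap.range A.vecMulLinear) :=
    Finite.of_surjective _ (Submodule.mkQ_surjective _)
  have hrow := (LinearMap.range A.vecMulLinear).card_eq_card_quotient_mul_card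
  have hcol := (LinearMap.ker A.mulVecLin).card_eq_card_quotient_mul_card
  rw [Nat.card_congr A.mulVecLin.quotKerEquivRange.toEquiv, A.card_ker_mulVecLin_zmod,
    mul_comm, hrow] at hcol
  exact Nat.eq_of_mul_eq_mul_right Nat.card_pos hcol.symm

theorem Matrix.card_closure_range_col_zmod (A : Matrix ι κ (ZMod m)) :
    Nat.card (AddSubgroup.closure (Set.range A.col)) =
      Nat.card (AddSubgroup.closure (Set.range A.row)) := by
  rw [AddSubgroup.closure_eq_toAddSubgroup_span_zmod m,
    AddSubgroup.closure_eq_toAddSubgroup_span_zmod m, ← range_mulVecLin, ← range_vecMulLinear]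
  exact A.card_range_mulVecLin_zmod

end Duality

def nsmulRange (n : ℕ) (G : Type*) [AddCommGroup G] : AddSubgroup G :=
  (nsmulAddMonoidHom n : G →+ G).range

instance (G : Type*) [AddCommGroup G] (p : ℕ) : Module (ZMod p) (G ⧸ nsmulRange p G) :=
  QuotientAddGroup.zmodModule fun x => ⟨x, rfl⟩

section nsmulRange

variable {G H : Type*} [AddCommGroup G] [AddCommGroup H] {n : ℕ}

theorem mem_nsmulRange {x : G} : x ∈ nsmulRange n G ↔ ∃ y, n • y = x := Iff.rfl

theorem card_nsmulRange_congr (e : G ≃+ H) :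
    Nat.card (nsmulRange n G) = Nat.card (nsmulRange n H) :=
  Nat.card_congr <| e.toEquiv.subtypeEquiv fun x => by
    simp only [mem_nsmulRange]
    exact ⟨fun ⟨y, hy⟩ => ⟨e y, by simp [← hy]⟩,
      fun ⟨y, hy⟩ => ⟨e.symm y, e.injective (by simp [hy])⟩⟩

theorem card_nsmulRange_pi {ι : Type*} [Fintype ι] (M : ι → Type*) [∀ i, AddCommGroup (M i)] :
    Nat.card (nsmulRange n (∀ i, M i)) = ∏ i, Nat.card (nsmulRange n (M i)) := by
  rw [← Nat.card_pi]
  refine Nat.card_congr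
    { toFun x i := ⟨x.1 i, ?_⟩
      invFun y := ⟨fun i => y i, ?_⟩
      left_inv _ := rfl
      right_inv _ := rfl }
  · obtain ⟨z, hz⟩ := x.2
    exact ⟨z i, congrFun hz i⟩
  · choose z hz using fun i => (y i).2
    exact ⟨z, funext hz⟩

theorem card_nsmulRange_closure_range {ι : Type*} (v : ι → G) :
    Nat.card (nsmulRange n (AddSubgroup.closure (Set.range v))) =
      Nat.card (AddSubgroup.closure (Set.range (n • v))) := by
  set K := AddSubgroup.closure (Set.range v)
  have hmap : (nsmulRange n K).map K.subtype = AddSubgroup.closure (Set.range (n • v)) := by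
    rw [nsmulRange, AddMonoidHom.map_range,
      show K.subtype.comp (nsmulAddMonoidHom n) = (nsmulAddMonoidHom n).comp K.subtype from rfl,
      AddMonoidHom.range_comp, AddSubgroup.range_subtype, AddMonoidHom.map_closure,
      ← Set.range_comp]
    rfl
  rw [← hmap]
  exact Nat.card_congr ((nsmulRange n K).equivMapOfInjective _ K.subtype_injective).toEquiv

theorem ZMod.nsmulRange_eq_zmultiples (c : ℕ) :
    nsmulRange n (ZMod c) = AddSubgroup.zmultiples (n : ZMod c) := by
  ext x
  simp only [mem_nsmulRange, AddSubgroup.mem_zmultiples_iff, nsmul_eq_mul, zsmul_eq_mul]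
  constructor
  · rintro ⟨y, rfl⟩
    obtain ⟨k, rfl⟩ := ZMod.intCast_surjective y
    exact ⟨k, mul_comm _ _⟩
  · rintro ⟨k, rfl⟩
    exact ⟨k, mul_comm _ _⟩

theorem card_eq_card_nsmulRange_mul_prod_gcd {ι : Type*} [Fintype ι] {c : ι → ℕ}
    [∀ i, NeZero (c i)] (e : G ≃+ ∀ i, ZMod (c i)) (n : ℕ) :
    Nat.card G = Nat.card (nsmulRange n G) * ∏ i, (c i).gcd n := by
  rw [Nat.card_congr e.toEquiv, card_nsmulRange_congr e, card_nsmulRange_pi, Nat.card_pi,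
    ← prod_mul_distrib]
  refine prod_congr rfl fun i _ => ?_
  rw [ZMod.nsmulRange_eq_zmultiples, Nat.card_zmultiples, ZMod.addOrderOf_coe _ (NeZero.ne _),
    Nat.card_zmod, Nat.div_mul_cancel (Nat.gcd_dvd_left _ _)]

end nsmulRange

section groupRank

variable {G H : Type*} [AddCommGroup G] [AddCommGroup H] {p α : ℕ}

theorem groupRank_le_of_addEquiv {ι : Type*} [Fintype ι] {c : ι → ℕ}
    (e : G ≃+ ∀ i, ZMod (c i)) : groupRank G ≤ Fintype.card ι :=
  Nat.sInf_le ⟨fun j => c ((Fintype.equivFin ι).symm j),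
    ⟨e.trans (RingEquiv.piCongrLeft' _ (Fintype.equivFin ι)).toAddEquiv⟩⟩

theorem exists_addEquiv_pi_zmod_groupRank [Finite G] :
    ∃ c : Fin (groupRank G) → ℕ, Nonempty (G ≃+ ∀ i, ZMod (c i)) := by
  classical
  obtain ⟨ι, _, c, -, ⟨e⟩⟩ := AddCommGroup.equiv_directSum_zmod_of_finite' G
  exact Nat.sInf_mem (s := {r | ∃ c : Fin r → ℕ, Nonempty (G ≃+ ∀ i, ZMod (c i))})
    ⟨_, _, ⟨(e.trans (DirectSum.addEquivProd _)).trans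
      (RingEquiv.piCongrLeft' _ (Fintype.equivFin ι)).toAddEquiv⟩⟩

theorem card_le_card_nsmulRange_mul_pow [Finite G] {r : ℕ} (hp : 0 < p) {c : Fin r → ℕ}
    (e : G ≃+ ∀ i, ZMod (c i)) : Nat.card G ≤ Nat.card (nsmulRange p G) * p ^ r := by
  have : Finite (∀ i, ZMod (c i)) := .of_equiv _ e.toEquiv
  have (i : Fin r) : NeZero (c i) :=
    have : Finite (ZMod (c i)) :=
      Finite.of_surjective (fun f : ∀ j, ZMod (c j) => f i) (Function.surjective_eval i)
    .of_pos (Nat.card_zmod (c i) ▸ Nat.card_pos)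
  calc Nat.card G = Nat.card (nsmulRange p G) * ∏ i, (c i).gcd p :=
        card_eq_card_nsmulRange_mul_prod_gcd e p
    _ ≤ Nat.card (nsmulRange p G) * ∏ _i : Fin r, p := by
        gcongr with i; exact Nat.le_of_dvd hp (Nat.gcd_dvd_right _ _)
    _ = Nat.card (nsmulRange p G) * p ^ r := by rw [prod_const, card_univ, Fintype.card_fin]

theorem card_eq_card_nsmulRange_mul_pow_groupRank [Finite G] (hp : p.Prime)
    (h : ∀ x : G, p ^ α • x = 0) :
    Nat.card G = Nat.card (nsmulRange p G) * p ^ groupRank G := by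
  classical
  obtain ⟨ι, _, c, hc, ⟨e⟩⟩ := AddCommGroup.equiv_directSum_zmod_of_finite' G
  let e' := e.trans (DirectSum.addEquivProd _)
  have (i : ι) : NeZero (c i) := ⟨by have := hc i; omega⟩
  have hdvd (i : ι) : p ∣ c i := by
    have : c i ∣ p ^ α := by
      have := congrFun (congrArg e' (h (e'.symm (Pi.single i 1)))) i
      simp only [map_nsmul, AddEquiv.apply_symm_apply, Pi.smul_apply, Pi.single_eq_same,
        nsmul_eq_mul, mul_one, map_zero, Pi.zero_apply] at this
      exact (ZMod.natCast_eq_zero_iff _ _).1 this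
    obtain ⟨b, -, hb⟩ := (Nat.dvd_prime_pow hp).1 this
    exact hb ▸ dvd_pow_self p (by rintro rfl; have := hc i; simp_all)
  have hcard : Nat.card G = Nat.card (nsmulRange p G) * p ^ Fintype.card ι := by
    rw [card_eq_card_nsmulRange_mul_prod_gcd e' p,
      prod_congr rfl fun i _ => Nat.gcd_eq_right (hdvd i), prod_const, card_univ]
  obtain ⟨d, ⟨f⟩⟩ := exists_addEquiv_pi_zmod_groupRank (G := G)
  have hge : p ^ Fintype.card ι ≤ p ^ groupRank G :=
    Nat.le_of_mul_le_mul_left (hcard ▸ card_le_card_nsmulRange_mul_pow hp.pos f) Nat.card_pos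
  rwa [le_antisymm (groupRank_le_of_addEquiv e') ((Nat.pow_le_pow_iff_right hp.one_lt).1 hge)]

theorem groupRank_eq_of_card_eq [Finite G] [Finite H] (hp : p.Prime)
    (hG : ∀ x : G, p ^ α • x = 0) (hH : ∀ x : H, p ^ α • x = 0)
    (hcard : Nat.card G = Nat.card H)
    (hcard_nsmul : Nat.card (nsmulRange p G) = Nat.card (nsmulRange p H)) :
    groupRank G = groupRank H := by
  rw [card_eq_card_nsmulRange_mul_pow_groupRank hp hG,
    card_eq_card_nsmulRange_mul_pow_groupRank hp hH, hcard_nsmul] at hcard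
  exact Nat.pow_right_injective hp.two_le (Nat.eq_of_mul_eq_mul_left Nat.card_pos hcard)

theorem card_quotient_nsmulRange [Finite G] (hp : p.Prime) (h : ∀ x : G, p ^ α • x = 0) :
    Nat.card (G ⧸ nsmulRange p G) = p ^ groupRank G := by
  have hG := card_eq_card_nsmulRange_mul_pow_groupRank hp h
  rw [(nsmulRange p G).card_eq_card_quotient_mul_card_addSubgroup, mul_comm] at hG
  exact Nat.eq_of_mul_eq_mul_left Nat.card_pos hG

theorem finrank_quotient_nsmulRange [Finite G] (hp : p.Prime) (h : ∀ x : G, p ^ α • x = 0) :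
    Module.finrank (ZMod p) (G ⧸ nsmulRange p G) = groupRank G := by
  have : Fact p.Prime := ⟨hp⟩
  have : Fintype (G ⧸ nsmulRange p G) := Fintype.ofFinite _
  refine Nat.pow_right_injective hp.two_le (?_ : p ^ _ = p ^ _)
  rw [← card_quotient_nsmulRange hp h, Nat.card_eq_fintype_card,
    Module.card_eq_pow_finrank (K := ZMod p), ZMod.card]

end groupRank

theorem Matrix.groupRank_closure_range_col {ι κ : Type*} [Fintype ι] [Fintype κ] {p α : ℕ}
    (hp : p.Prime) (A : Matrix ι κ (ZMod (p ^ α))) :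
    groupRank (AddSubgroup.closure (Set.range A.col)) =
      groupRank (AddSubgroup.closure (Set.range A.row)) := by
  have : NeZero (p ^ α) := ⟨pow_ne_zero _ hp.ne_zero⟩
  refine groupRank_eq_of_card_eq hp (ZModModule.char_nsmul_eq_zero (p ^ α))
    (ZModModule.char_nsmul_eq_zero (p ^ α)) A.card_closure_range_col_zmod ?_
  rw [card_nsmulRange_closure_range, card_nsmulRange_closure_range]
  exact (p • A).card_closure_range_col_zmod

section Generators

variable {G : Type*} [AddCommGroup G] {p α : ℕ}

theorem AddSubgroup.eq_top_of_sup_nsmulRange_eq_top (h : ∀ x : G, p ^ α • x = 0)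
    {H : AddSubgroup G} (hH : H ⊔ nsmulRange p G = ⊤) : H = ⊤ := by
  have step (x : G) : ∃ y, x - p • y ∈ H := by
    obtain ⟨a, ha, _, ⟨y, rfl⟩, hx⟩ := mem_sup.1 (hH ▸ mem_top x)
    exact ⟨y, by rw [← hx]; simpa using ha⟩
  have iterate (n : ℕ) (x : G) : ∃ y, x - p ^ n • y ∈ H := by
    induction n generalizing x with
    | zero => exact ⟨x, by simp⟩
    | succ n ih =>
      obtain ⟨y, hy⟩ := ih x
      obtain ⟨z, hz⟩ := step y
      refine ⟨z, ?_⟩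
      convert H.add_mem hy (H.nsmul_mem hz (p ^ n)) using 1
      rw [smul_sub, ← mul_nsmul', pow_succ]
      abel
  refine eq_top_iff.2 fun x _ => ?_
  obtain ⟨y, hy⟩ := iterate α x
  simpa [h] using hy

theorem exists_finset_card_eq_finrank_span_image_eq_top {K V ι : Type*} [DivisionRing K]
    [AddCommGroup V] [Module K V] [Finite ι] {v : ι → V}
    (hv : Submodule.span K (Set.range v) = ⊤) :
    ∃ s : Finset ι, s.card = Module.finrank K V ∧ Submodule.span K (v '' s) = ⊤ := by
  obtain ⟨κ, a, ha, hspan, hli⟩ := exists_linearIndependent' K v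
  have : Fintype κ := have := Finite.of_injective a ha; Fintype.ofFinite κ
  have himage : v '' (univ.map ⟨a, ha⟩ : Finset ι) = Set.range (v ∘ a) := by
    simp [Set.range_comp]
  refine ⟨univ.map ⟨a, ha⟩, ?_, ?_⟩
  · rw [card_map, card_univ, ← finrank_span_eq_card hli, hspan, hv, finrank_top]
  · rw [himage, hspan, hv]

theorem exists_finset_card_eq_groupRank_closure_eq_top [Finite G] (hp : p.Prime)
    (h : ∀ x : G, p ^ α • x = 0) {ι : Type*} [Finite ι] {v : ι → G}
    (hv : AddSubgroup.closure (Set.range v) = ⊤) :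
    ∃ s : Finset ι, s.card = groupRank G ∧ AddSubgroup.closure (v '' s) = ⊤ := by
  have : Fact p.Prime := ⟨hp⟩
  let π : G →+ G ⧸ nsmulRange p G := QuotientAddGroup.mk' _
  have hspan : Submodule.span (ZMod p) (Set.range (π ∘ v)) = ⊤ := by
    rw [← Submodule.toAddSubgroup_inj, ← AddSubgroup.closure_eq_toAddSubgroup_span_zmod,
      Set.range_comp, ← AddMonoidHom.map_closure, hv, ← AddMonoidHom.range_eq_map,
      Submodule.top_toAddSubgroup, AddMonoidHom.range_eq_top]
    exact QuotientAddGroup.mk'_surjective _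
  obtain ⟨s, hs, hspan_s⟩ := exists_finset_card_eq_finrank_span_image_eq_top hspan
  refine ⟨s, hs.trans (finrank_quotient_nsmulRange hp h), ?_⟩
  refine AddSubgroup.eq_top_of_sup_nsmulRange_eq_top h ?_
  rw [← QuotientAddGroup.ker_mk' (nsmulRange p G), ← AddSubgroup.comap_map_eq,
    AddMonoidHom.map_closure, ← Set.image_comp, AddSubgroup.closure_eq_toAddSubgroup_span_zmod p,
    hspan_s, Submodule.top_toAddSubgroup, AddSubgroup.comap_top]

theorem exists_finset_card_eq_groupRank_closure_image_eq [Finite G] (hp : p.Prime)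
    (h : ∀ x : G, p ^ α • x = 0) {ι : Type*} [Finite ι] (v : ι → G) :
    ∃ s : Finset ι, s.card = groupRank (AddSubgroup.closure (Set.range v)) ∧
      AddSubgroup.closure (v '' s) = AddSubgroup.closure (Set.range v) := by
  set K := AddSubgroup.closure (Set.range v)
  let w : ι → K := fun i => ⟨v i, AddSubgroup.subset_closure ⟨i, rfl⟩⟩
  have hw : AddSubgroup.closure (Set.range w) = ⊤ := by
    convert AddSubgroup.closure_closure_coe_preimage (k := Set.range v)
    ext x
    exact ⟨fun ⟨i, hi⟩ => ⟨i, congrArg Subtype.val hi⟩, fun ⟨i, hi⟩ => ⟨i, Subtype.ext hi⟩⟩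
  obtain ⟨s, hs, hgen⟩ :=
    exists_finset_card_eq_groupRank_closure_eq_top hp (fun x => Subtype.ext (h x)) hw
  refine ⟨s, hs, ?_⟩
  have := congrArg (AddSubgroup.map K.subtype) hgen
  rwa [AddMonoidHom.map_closure, Set.image_image, ← AddMonoidHom.range_eq_map,
    AddSubgroup.range_subtype] at this

end Generators

theorem rows_spanning_subset_general (p α k l r : ℕ) (hp : p.Prime)
    (A : Matrix (Fin k) (Fin l) (ZMod (p ^ α))) (hr : matrixRank A = r) :
    ∃ s : Finset (Fin k), s.card = r ∧
      AddSubgroup.closure ((fun i => A i) '' ↑s)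
        = AddSubgroup.closure (Set.range fun i => A i) := by
  have : NeZero (p ^ α) := ⟨pow_ne_zero _ hp.ne_zero⟩
  obtain ⟨s, hs, hgen⟩ := exists_finset_card_eq_groupRank_closure_image_eq hp
    (ZModModule.char_nsmul_eq_zero (p ^ α)) A.row
  refine ⟨s, hs.trans ?_, hgen⟩
  rw [← hr, ← A.groupRank_closure_range_col hp]
  rfl

theorem rows_spanning_subset (p α k l r : ℕ) (hp : p.Prime) (hα : 0 < α)
    (A : Matrix (Fin k) (Fin l) (ZMod (p ^ α))) (hr : matrixRank A = r) :
    ∃ s : Finset (Fin k), s.card = r ∧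
      AddSubgroup.closure ((fun i => A i) '' ↑s)
        = AddSubgroup.closure (Set.range fun i => A i) :=
  rows_spanning_subset_general p α k l r hp A hr
end

section
/- Let m = p^α be a prime power and A a matrix over Z_m with rank r (rank of the subgroup generated by its columns). Then A has an r × r submatrix of rank r. -/
open Finset

/-!
The column space `G ≤ (ℤ/p^α)^k` of `A` is a finite abelian `p`-group of rank `r`. In a
cyclic decomposition of `G` with the minimal number `r` of factors no factor is trivial, so
every factor is `ℤ/p^β` with `β ≥ 1`; hence the socle `G[p]` and the quotient `G/pG` both
have `p^r` elements, i.e. are `𝔽_p`-spaces of dimension `r`.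

The images of the columns span `G/pG`, so `r` of them form a basis, and since `p` is nilpotent on
`G` (Nakayama) these `r` columns already generate `G`. Dually, the coordinate functionals restricted
to `G[p]` separate points, so `r` of them form a basis of the dual space; a homomorphism out of a
`p`-group that is injective on the socle is injective. Hence projecting onto the chosen `r` rows
maps the group generated by the chosen `r` columns isomorphically onto the column space of the
`r × r` submatrix.
-/

open Module
open AddSubgroup (torsionBy)

section LinearAlgebra

variable {K V ι : Type*} [Field K] [AddCommGroup V] [Module K V] [FiniteDimensional K V]

lemma exists_fin_subfamily_span_eq_top {d : ℕ} (hd : finrank K V = d) (v : ι → V)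
    (hv : Submodule.span K (Set.range v) = ⊤) :
    ∃ g : Fin d → ι, Function.Injective g ∧ Submodule.span K (Set.range (v ∘ g)) = ⊤ := by
  obtain ⟨κ, a, ha, hspan, hli⟩ := exists_linearIndependent' K v
  rw [hv] at hspan
  have : Finite κ := hli.finite
  let b := Basis.mk hli hspan.ge
  let e : Fin d ≃ κ := (Finite.equivFinOfCardEq (hd ▸ finrank_eq_nat_card_basis b).symm).symm
  refine ⟨a ∘ e, ha.comp e.injective, ?_⟩
  rw [← Function.comp_assoc, Set.range_comp, e.range_eq_univ, Set.image_univ, hspan]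

lemma exists_fin_subfamily_separating {d : ℕ} (hd : finrank K V = d) (φ : ι → Dual K V)
    (hφ : ∀ x, (∀ i, φ i x = 0) → x = 0) :
    ∃ f : Fin d → ι, Function.Injective f ∧ ∀ x, (∀ j, φ (f j) x = 0) → x = 0 := by
  have hspan : Submodule.span K (Set.range φ) = ⊤ := by
    refine Submodule.span_eq_top_of_ne_zero fun x hx => ?_
    obtain ⟨i, hi⟩ := not_forall.mp (mt (hφ x) hx)
    exact ⟨φ i, ⟨i, rfl⟩, hi⟩
  obtain ⟨f, hf, hspan'⟩ :=
    exists_fin_subfamily_span_eq_top (Subspace.dual_finrank_eq.trans hd) φ hspan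
  refine ⟨f, hf, fun x hx => ?_⟩
  have hker : Submodule.span K (Set.range (φ ∘ f)) ≤ LinearMap.ker (Dual.eval K V x) :=
    Submodule.span_le.2 <| Set.range_subset_iff.2 hx
  rw [hspan'] at hker
  exact (forall_dual_apply_eq_zero_iff K x).1 fun ψ => hker Submodule.mem_top

lemma finrank_zmod_eq_of_card_eq_pow {p d : ℕ} (hp : p.Prime) [Module (ZMod p) V] [Finite V]
    (hV : Nat.card V = p ^ d) : finrank (ZMod p) V = d := by
  have : Fact p.Prime := ⟨hp⟩
  have : Module.Finite (ZMod p) V := Module.Finite.of_finite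
  have h := Module.natCard_eq_pow_finrank (K := ZMod p) (V := V)
  rw [hV, Nat.card_zmod] at h
  exact (Nat.pow_right_injective hp.two_le h).symm

lemma Submodule.toAddSubgroup_span_zmod {n : ℕ} [Module (ZMod n) V] (s : Set V) :
    (Submodule.span (ZMod n) s).toAddSubgroup = AddSubgroup.closure s := by
  refine le_antisymm (fun x hx => ?_) (AddSubgroup.closure_le _ |>.2 Submodule.subset_span)
  have h : Submodule.span (ZMod n) s ≤ AddSubgroup.toZModSubmodule n (AddSubgroup.closure s) :=
    Submodule.span_le.2 AddSubgroup.subset_closure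
  exact h hx

end LinearAlgebra

lemma AddSubgroup.closure_range_restrict_eq_top {M ι : Type*} [AddGroup M] (u : ι → M) :
    AddSubgroup.closure (Set.range fun j =>
      (⟨u j, AddSubgroup.subset_closure ⟨j, rfl⟩⟩ : AddSubgroup.closure (Set.range u))) = ⊤ := by
  refine Eq.trans ?_ (AddSubgroup.closure_closure_coe_preimage (k := Set.range u))
  congr 1
  ext ⟨x, hx⟩
  simp only [Set.mem_range, Subtype.ext_iff]
  rfl

section GroupRank

variable {G H : Type*} [AddCommGroup G] [AddCommGroup H]

lemma groupRank_congr (e : G ≃+ H) : groupRank G = groupRank H := by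
  unfold groupRank
  congr 1
  ext r
  exact ⟨fun ⟨c, ⟨f⟩⟩ => ⟨c, ⟨e.symm.trans f⟩⟩, fun ⟨c, ⟨f⟩⟩ => ⟨c, ⟨e.trans f⟩⟩⟩

lemma exists_equiv_pi_zmod_fin_card {ι : Type*} [Fintype ι] {c : ι → ℕ}
    (e : G ≃+ ∀ i, ZMod (c i)) :
    ∃ c' : Fin (Fintype.card ι) → ℕ, Nonempty (G ≃+ ∀ j, ZMod (c' j)) :=
  ⟨_, ⟨e.trans (LinearEquiv.piCongrLeft' ℤ (fun i => ZMod (c i)) (Fintype.equivFin ι)).toAddEquiv⟩⟩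

noncomputable def AddEquiv.piZModSubtypeNeOne {ι : Type*} (c : ι → ℕ) :
    (∀ i, ZMod (c i)) ≃+ ∀ i : {i // c i ≠ 1}, ZMod (c i) := by
  classical
  refine AddEquiv.ofBijective (AddMonoidHom.pi fun i => Pi.evalAddMonoidHom _ i.1) ⟨?_, ?_⟩
  · refine (injective_iff_map_eq_zero _).2 fun x hx => funext fun i => ?_
    by_cases hi : c i = 1
    · have : Subsingleton (ZMod (c i)) := by rw [hi]; infer_instance
      exact Subsingleton.elim _ _
    · exact congr_fun hx ⟨i, hi⟩
  · exact fun y => ⟨fun i => if hi : c i = 1 then 0 else y ⟨i, hi⟩, funext fun i => dif_neg i.2⟩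

lemma groupRank_le_card_ne_one {ι : Type*} [Fintype ι] {c : ι → ℕ}
    (e : G ≃+ ∀ i, ZMod (c i)) : groupRank G ≤ Fintype.card {i // c i ≠ 1} :=
  Nat.sInf_le (exists_equiv_pi_zmod_fin_card (e.trans (AddEquiv.piZModSubtypeNeOne c)))

variable (G) in
lemma exists_equiv_pi_zmod_groupRank [Finite G] :
    ∃ c : Fin (groupRank G) → ℕ, (∀ i, c i ≠ 1) ∧ Nonempty (G ≃+ ∀ i, ZMod (c i)) := by
  obtain ⟨c, ⟨e⟩⟩ : ∃ c : Fin (groupRank G) → ℕ, Nonempty (G ≃+ ∀ i, ZMod (c i)) := by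
    obtain ⟨ι, _, q, -, m, ⟨e⟩⟩ := AddCommGroup.equiv_directSum_zmod_of_finite G
    exact Nat.sInf_mem (s := {r | ∃ c : Fin r → ℕ, Nonempty (G ≃+ ∀ i, ZMod (c i))})
      ⟨_, exists_equiv_pi_zmod_fin_card (e.trans (DirectSum.addEquivProd _))⟩
  refine ⟨c, fun i hi => ?_, ⟨e⟩⟩
  have hlt : Fintype.card {j // c j ≠ 1} < Fintype.card (Fin (groupRank G)) :=
    Fintype.card_subtype_lt (not_not.mpr hi)
  have := groupRank_le_card_ne_one e
  simp only [Fintype.card_fin] at hlt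
  omega

lemma dvd_of_equiv_pi_zmod {ι : Type*} [DecidableEq ι] {c : ι → ℕ} (e : G ≃+ ∀ i, ZMod (c i))
    {n : ℕ} (hG : ∀ x : G, n • x = 0) (i : ι) : c i ∣ n := by
  have h : n • (Pi.single i 1 : ∀ i, ZMod (c i)) = 0 := by
    rw [← e.apply_symm_apply (Pi.single i 1), ← map_nsmul, hG, map_zero]
  simpa [← ZMod.natCast_eq_zero_iff] using congr_fun h i

end GroupRank

section Torsion

variable {G H : Type*} [AddCommGroup G] [AddCommGroup H]

lemma card_torsionBy_congr (e : G ≃+ H) (n : ℕ) :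
    Nat.card (torsionBy G n) = Nat.card (torsionBy H n) :=
  Nat.card_congr <| e.toEquiv.subtypeEquiv fun x => by simp [← map_nsmul]

lemma card_torsionBy_pi {ι : Type*} [Fintype ι] (M : ι → Type*) [∀ i, AddCommGroup (M i)]
    (n : ℕ) : Nat.card (torsionBy (∀ i, M i) n) = ∏ i, Nat.card (torsionBy (M i) n) := by
  rw [← Nat.card_pi]
  exact Nat.card_congr <|
    (Equiv.subtypeEquivRight fun x => by simp [funext_iff]).trans Equiv.subtypePiEquivPi

lemma card_torsionBy_mul_card_range_nsmul [Finite G] (n : ℕ) :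
    Nat.card (torsionBy G n) * Nat.card (nsmulAddMonoidHom n : G →+ G).range = Nat.card G := by
  have hker : (nsmulAddMonoidHom n : G →+ G).ker = torsionBy G n := by
    ext x
    simp
  rw [← hker, ← Nat.card_congr (QuotientAddGroup.quotientKerEquivRange _).toEquiv, mul_comm,
    ← AddSubgroup.card_eq_card_quotient_mul_card_addSubgroup]

lemma card_quotient_range_nsmul [Finite G] (n : ℕ) :
    Nat.card (G ⧸ (nsmulAddMonoidHom n : G →+ G).range) = Nat.card (torsionBy G n) := by
  have h := AddSubgroup.card_eq_card_quotient_mul_card_addSubgroup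
    (nsmulAddMonoidHom n : G →+ G).range
  exact Nat.eq_of_mul_eq_mul_right Nat.card_pos
    (h.symm.trans (card_torsionBy_mul_card_range_nsmul n).symm)

lemma ZMod.range_nsmulAddMonoidHom (c n : ℕ) :
    (nsmulAddMonoidHom n : ZMod c →+ ZMod c).range = AddSubgroup.zmultiples (n : ZMod c) := by
  ext y
  simp only [AddMonoidHom.mem_range, nsmulAddMonoidHom_apply, AddSubgroup.mem_zmultiples_iff]
  constructor
  · rintro ⟨x, rfl⟩
    obtain ⟨k, rfl⟩ := ZMod.intCast_surjective x
    exact ⟨k, by simp [mul_comm]⟩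
  · rintro ⟨k, rfl⟩
    exact ⟨k, by simp [mul_comm]⟩

lemma ZMod.card_torsionBy {c p : ℕ} (hc : c ≠ 0) (hpc : p ∣ c) :
    Nat.card (torsionBy (ZMod c) p) = p := by
  have : NeZero c := ⟨hc⟩
  have h := card_torsionBy_mul_card_range_nsmul (G := ZMod c) p
  rw [ZMod.range_nsmulAddMonoidHom, Nat.card_zmultiples, ZMod.addOrderOf_coe _ hc,
    Nat.gcd_eq_right hpc, Nat.card_zmod] at h
  obtain ⟨m, rfl⟩ := hpc
  rw [Nat.mul_div_cancel_left _ (Nat.pos_of_ne_zero (left_ne_zero_of_mul hc))] at h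
  exact Nat.eq_of_mul_eq_mul_right (Nat.pos_of_ne_zero (right_ne_zero_of_mul hc)) h

lemma card_torsionBy_eq_pow_groupRank [Finite G] {p n : ℕ} (hp : p.Prime)
    (hG : ∀ x : G, p ^ n • x = 0) : Nat.card (torsionBy G p) = p ^ groupRank G := by
  obtain ⟨c, hc1, ⟨e⟩⟩ := exists_equiv_pi_zmod_groupRank G
  have hc (i) : Nat.card (torsionBy (ZMod (c i)) p) = p := by
    obtain ⟨β, -, hβ⟩ := (Nat.dvd_prime_pow hp).1 (dvd_of_equiv_pi_zmod e hG i)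
    have hβ0 : β ≠ 0 := by rintro rfl; exact hc1 i (by simpa using hβ)
    rw [hβ]
    exact ZMod.card_torsionBy (pow_ne_zero _ hp.ne_zero) (dvd_pow_self p hβ0)
  rw [card_torsionBy_congr e, card_torsionBy_pi, Finset.prod_congr rfl fun i _ => hc i]
  simp

end Torsion

section PGroup

variable {G : Type*} [AddCommGroup G] {p n : ℕ}

lemma AddSubgroup.eq_top_of_sup_range_nsmul_eq_top (hG : ∀ x : G, p ^ n • x = 0)
    {H : AddSubgroup G} (hH : H ⊔ (nsmulAddMonoidHom p : G →+ G).range = ⊤) : H = ⊤ := by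
  have key (k : ℕ) : ∀ x : G, ∃ y ∈ H, ∃ z, x = y + p ^ k • z := by
    induction k with
    | zero => exact fun x => ⟨0, H.zero_mem, x, by simp⟩
    | succ k ih =>
      intro x
      obtain ⟨y, hy, z, rfl⟩ := ih x
      obtain ⟨y', hy', _, ⟨z', rfl⟩, hz⟩ := AddSubgroup.mem_sup.1 (hH ▸ AddSubgroup.mem_top z)
      refine ⟨y + p ^ k • y', H.add_mem hy (H.nsmul_mem hy' _), z', ?_⟩
      rw [← hz, nsmulAddMonoidHom_apply, smul_add, smul_smul, ← pow_succ, add_assoc]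
  refine eq_top_iff.2 fun x _ => ?_
  obtain ⟨y, hy, z, rfl⟩ := key n x
  rwa [hG, add_zero]

lemma injective_of_eq_zero_of_mem_torsionBy {H : Type*} [AddCommGroup H] {f : G →+ H}
    (hG : ∀ x : G, p ^ n • x = 0) (hf : ∀ x ∈ torsionBy G p, f x = 0 → x = 0) :
    Function.Injective f := by
  have key (k : ℕ) : ∀ x : G, p ^ k • x = 0 → f x = 0 → x = 0 := by
    induction k with
    | zero => simp
    | succ k ih =>
      intro x hx hfx
      have hpx : p • x = 0 := ih (p • x) (by rwa [smul_smul, ← pow_succ]) (by simp [hfx])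
      exact hf x (AddSubgroup.torsionBy.nsmul_iff.2 hpx) hfx
  exact (injective_iff_map_eq_zero f).2 fun x => key n x (hG x)

variable [Finite G] {ι : Type*}

theorem exists_fin_groupRank_subfamily_closure_eq_top (hp : p.Prime)
    (hG : ∀ x : G, p ^ n • x = 0) (v : ι → G) (hv : AddSubgroup.closure (Set.range v) = ⊤) :
    ∃ g : Fin (groupRank G) → ι,
      Function.Injective g ∧ AddSubgroup.closure (Set.range (v ∘ g)) = ⊤ := by
  have : Fact p.Prime := ⟨hp⟩
  set R := (nsmulAddMonoidHom p : G →+ G).range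
  have : Module (ZMod p) (G ⧸ R) := QuotientAddGroup.zmodModule fun x => ⟨x, rfl⟩
  let π := QuotientAddGroup.mk' R
  have hrank : finrank (ZMod p) (G ⧸ R) = groupRank G := finrank_zmod_eq_of_card_eq_pow hp <| by
    rw [card_quotient_range_nsmul, card_torsionBy_eq_pow_groupRank hp hG]
  have hspan : Submodule.span (ZMod p) (Set.range (π ∘ v)) = ⊤ := by
    rw [← Submodule.toAddSubgroup_inj, Submodule.toAddSubgroup_span_zmod, Set.range_comp,
      ← AddMonoidHom.map_closure, hv, ← AddMonoidHom.range_eq_map, QuotientAddGroup.range_mk',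
      Submodule.top_toAddSubgroup]
  obtain ⟨g, hg, hspan'⟩ := exists_fin_subfamily_span_eq_top hrank (π ∘ v) hspan
  rw [← Submodule.toAddSubgroup_inj, Submodule.toAddSubgroup_span_zmod, Function.comp_assoc,
    Set.range_comp, ← AddMonoidHom.map_closure, Submodule.top_toAddSubgroup] at hspan'
  refine ⟨g, hg, AddSubgroup.eq_top_of_sup_range_nsmul_eq_top hG ?_⟩
  change _ ⊔ R = ⊤
  rw [← QuotientAddGroup.ker_mk' R, ← AddSubgroup.comap_map_eq, hspan', AddSubgroup.comap_top]

theorem exists_fin_groupRank_subfamily_injective (hp : p.Prime) (hG : ∀ x : G, p ^ n • x = 0)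
    {C : Type*} [AddCommGroup C] (hC : Nat.card (torsionBy C p) = p) (φ : ι → G →+ C)
    (hφ : Function.Injective (AddMonoidHom.pi φ)) :
    ∃ f : Fin (groupRank G) → ι, Function.Injective f ∧
      Function.Injective (AddMonoidHom.pi fun j => φ (f j)) := by
  have : Fact p.Prime := ⟨hp⟩
  have : Module (ZMod p) (torsionBy G p) := AddSubgroup.torsionBy.zmodModule
  have : Module (ZMod p) (torsionBy C p) := AddSubgroup.torsionBy.zmodModule
  have : Finite (torsionBy C p) := Nat.finite_of_card_ne_zero (by rw [hC]; exact hp.ne_zero)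
  have hrank : finrank (ZMod p) (torsionBy G p) = groupRank G :=
    finrank_zmod_eq_of_card_eq_pow hp (card_torsionBy_eq_pow_groupRank hp hG)
  have e : torsionBy C p ≃ₗ[ZMod p] ZMod p := LinearEquiv.ofFinrankEq _ _ <| by
    rw [finrank_zmod_eq_of_card_eq_pow hp (hC.trans (pow_one p).symm), finrank_self]
  have hmaps (i : ι) (x : torsionBy G p) : φ i x ∈ torsionBy C p := by
    have hx := x.2
    rw [AddSubgroup.torsionBy.nsmul_iff] at hx ⊢
    rw [← map_nsmul, hx, map_zero]
  let ψ (i : ι) : Dual (ZMod p) (torsionBy G p) := e.toLinearMap ∘ₗ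
    (((φ i).comp (torsionBy G p).subtype).codRestrict _ (hmaps i)).toZModLinearMap p
  have hψ (i : ι) (x : torsionBy G p) : ψ i x = 0 ↔ φ i x = 0 := by
    rw [show ψ i x = e ⟨φ i x, hmaps i x⟩ from rfl, e.map_eq_zero_iff, AddSubgroup.mk_eq_zero]
  obtain ⟨f, hf, hsep⟩ := exists_fin_subfamily_separating hrank ψ fun x hx =>
    Subtype.ext <| (injective_iff_map_eq_zero _).1 hφ x <| funext fun i => (hψ i x).1 (hx i)
  refine ⟨f, hf, injective_of_eq_zero_of_mem_torsionBy hG fun x hx hx0 => ?_⟩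
  exact congrArg Subtype.val <| hsep ⟨x, hx⟩ fun j => (hψ (f j) ⟨x, hx⟩).2 (congr_fun hx0 j)

end PGroup

theorem full_rank_submatrix (p α k l r : ℕ) (hp : p.Prime) (hα : 0 < α)
    (A : Matrix (Fin k) (Fin l) (ZMod (p ^ α))) (hr : matrixRank A = r) :
    ∃ (f : Fin r → Fin k) (g : Fin r → Fin l),
      Function.Injective f ∧ Function.Injective g ∧
      matrixRank (A.submatrix f g) = r := by
  have : NeZero (p ^ α) := ⟨pow_ne_zero α hp.ne_zero⟩
  let G := colSpan A
  change groupRank G = r at hr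
  subst hr
  let col (j : Fin l) : G := ⟨fun i => A i j, AddSubgroup.subset_closure ⟨j, rfl⟩⟩
  have hG (x : G) : p ^ α • x = 0 := Subtype.ext <| funext fun i => by simp
  obtain ⟨g, hg, hgen⟩ := exists_fin_groupRank_subfamily_closure_eq_top hp hG col
    (AddSubgroup.closure_range_restrict_eq_top _)
  obtain ⟨f, hf, hinj⟩ := exists_fin_groupRank_subfamily_injective hp hG
    (ZMod.card_torsionBy (pow_ne_zero α hp.ne_zero) (dvd_pow_self p hα.ne'))
    (fun i => (Pi.evalAddMonoidHom _ i).comp G.subtype)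
    fun x y h => Subtype.ext <| funext fun i => congr_fun h i
  refine ⟨f, g, hf, hg, ?_⟩
  have hspan : colSpan (A.submatrix f g) =
      (AddMonoidHom.pi fun j => (Pi.evalAddMonoidHom _ (f j)).comp G.subtype).range := by
    rw [AddMonoidHom.range_eq_map, ← hgen, AddMonoidHom.map_closure, ← Set.range_comp]
    rfl
  rw [matrixRank, hspan, ← groupRank_congr (AddMonoidHom.ofInjective hinj)]
end

section
/- Let m = p^α be a prime power, A a matrix over Z_m with rank r, v ∈ Z_m^l fixed, and w chosen uniformly from {0,1}^k. For 0 ≤ t ≤ 1, the probability that v + Aw has at most tr nonzero entries is at most C(r, ⌊tr⌋)·2^{tr}·2^{−r} ≤ 2^{(t + H(t) − 1)r + o(1)}, where H(t) = −t log₂ t − (1−t) log₂(1−t). -/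
/-!
Let `H ≤ (ℤ/p^α)^l` be the column space of `A` and `W = H[p]` its `p`-torsion. From the
decomposition of `H` into cyclic `p`-groups, `|W| ≥ p^r`. Choosing coordinates greedily gives a
set `I` of `r` coordinates on which `W` projects onto `p^r` elements, and then every `T ⊆ I` still
sees `p^|T|` of them.

If `v + Aw` has at most `m = ⌊tr⌋` nonzero entries, it vanishes on `I \ S` for some `m`-subset
`S ⊆ I`. Vanishing on `T = I \ S` is a linear condition `∑ wⱼ yⱼ = b` in `(ℤ/p^α)^T`, where the
group `G` generated by the `yⱼ` has `|G/pG| = |G[p]| ≥ p^|T|`. So `|T|` of the `yⱼ` are linearly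
independent in the `𝔽_p`-space `G/pG`, and as a nonzero `{-1,0,1}`-combination cannot vanish
modulo `p`, a `0/1` solution is determined by its other `k - |T|` entries (Odlyzko's argument).
A union bound over the `C(r, m)` choices of `S` gives at most `C(r, m) 2^(k - r + m)` vectors `w`.
-/

open Finset

section Torsion

variable {p : ℕ} {M N : Type*} [AddCommGroup M] [AddCommGroup N]

variable (p M) in
abbrev pTorsion : AddSubgroup M := (nsmulAddMonoidHom (α := M) p).ker

theorem mem_pTorsion {x : M} : x ∈ pTorsion p M ↔ p • x = 0 := Iff.rfl

theorem map_pTorsion_le (f : M →+ N) : (pTorsion p M).map f ≤ pTorsion p N := by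
  rintro _ ⟨x, hx, rfl⟩
  rw [SetLike.mem_coe, mem_pTorsion] at hx
  rw [mem_pTorsion, ← map_nsmul, hx, map_zero]

theorem card_pTorsion_congr (e : M ≃+ N) :
    Nat.card (pTorsion p M) = Nat.card (pTorsion p N) :=
  Nat.card_congr <| e.toEquiv.subtypeEquiv fun x => by
    simp only [mem_pTorsion, AddEquiv.toEquiv_eq_coe, EquivLike.coe_coe, ← map_nsmul,
      AddEquiv.map_eq_zero_iff]

theorem card_pTorsion_pi {ι : Type*} [Fintype ι] (M : ι → Type*) [∀ i, AddCommGroup (M i)] :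
    Nat.card (pTorsion p (∀ i, M i)) = ∏ i, Nat.card (pTorsion p (M i)) := by
  rw [← Nat.card_pi]
  exact Nat.card_congr <| (Equiv.subtypeEquivRight fun f => by
    simp only [mem_pTorsion, funext_iff, Pi.smul_apply, Pi.zero_apply]).trans
    (Equiv.subtypePiEquivPi (p := fun i (x : M i) => p • x = 0))

theorem Nat.Prime.le_card_of_mem_of_nsmul_eq_zero (hp : p.Prime) {H : AddSubgroup M} [Finite H]
    {x : M} (hxH : x ∈ H) (hx : x ≠ 0) (hpx : p • x = 0) : p ≤ Nat.card H := by
  have : Fact p.Prime := ⟨hp⟩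
  have hord : addOrderOf (⟨x, hxH⟩ : H) = p :=
    addOrderOf_eq_prime (Subtype.ext hpx) (by simpa [Subtype.ext_iff] using hx)
  exact Nat.le_of_dvd Nat.card_pos (hord ▸ addOrderOf_dvd_natCard _)

theorem card_pTorsion_zmod_le {n : ℕ} [NeZero n] (hp : 0 < p) :
    Nat.card (pTorsion p (ZMod n)) ≤ p := by
  classical
  rw [Nat.card_eq_fintype_card, Fintype.card_subtype]
  simpa only [mem_pTorsion] using IsAddCyclic.card_nsmul_eq_zero_le (α := ZMod n) hp

theorem Nat.Prime.le_card_pTorsion_zmod (hp : p.Prime) {n : ℕ} (hn : n ≠ 0) (hpn : p ∣ n) :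
    p ≤ Nat.card (pTorsion p (ZMod n)) := by
  obtain ⟨c, rfl⟩ := hpn
  have hc : c ≠ 0 := right_ne_zero_of_mul hn
  have : NeZero (p * c) := ⟨hn⟩
  refine hp.le_card_of_mem_of_nsmul_eq_zero (x := (c : ZMod (p * c))) ?_ ?_ ?_
  · rw [mem_pTorsion, nsmul_eq_mul, ← Nat.cast_mul, ZMod.natCast_self]
  · rw [Ne, ZMod.natCast_eq_zero_iff]
    exact fun h => hc (Nat.eq_zero_of_dvd_of_lt h (lt_mul_left (Nat.pos_of_ne_zero hc) hp.one_lt))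
  · rw [nsmul_eq_mul, ← Nat.cast_mul, ZMod.natCast_self]

end Torsion

section Rank

open DirectSum

variable {p : ℕ} {G : Type*} [AddCommGroup G]

theorem groupRank_le_card_of_addEquiv {ι : Type*} [Fintype ι] (c : ι → ℕ)
    (f : G ≃+ ⨁ i, ZMod (c i)) : groupRank G ≤ Fintype.card ι :=
  Nat.sInf_le ⟨_, ⟨f.trans ((DirectSum.equivCongrLeft (Fintype.equivFin ι)).trans
    (DirectSum.addEquivProd _))⟩⟩

theorem Nat.Prime.pow_groupRank_le_card_pTorsion (hp : p.Prime) [Finite G] {e : ℕ}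
    (hG : ∀ x : G, p ^ e • x = 0) : p ^ groupRank G ≤ Nat.card (pTorsion p G) := by
  classical
  obtain ⟨ι, _, n, hn, ⟨f⟩⟩ := AddCommGroup.equiv_directSum_zmod_of_finite' G
  have hdvd : ∀ i, p ∣ n i := by
    intro i
    have hx := congrArg (fun y => f y i) (hG (f.symm (of _ i 1)))
    simp only [map_nsmul, AddEquiv.apply_symm_apply, map_zero, DirectSum.smul_apply, of_eq_same,
      DirectSum.zero_apply, nsmul_eq_mul, mul_one, ZMod.natCast_eq_zero_iff] at hx
    obtain ⟨c, hc, hnc⟩ := (Nat.dvd_prime_pow hp).1 hx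
    have hc0 : c ≠ 0 := by rintro rfl; exact (hn i).ne' (by simpa using hnc)
    exact hnc ▸ dvd_pow_self p hc0
  calc p ^ groupRank G ≤ p ^ Fintype.card ι :=
        Nat.pow_le_pow_right hp.pos (groupRank_le_card_of_addEquiv n f)
    _ = ∏ _i : ι, p := by rw [Finset.prod_const, Finset.card_univ]
    _ ≤ ∏ i, Nat.card (pTorsion p (ZMod (n i))) :=
        Finset.prod_le_prod' fun i _ => hp.le_card_pTorsion_zmod (by have := hn i; omega) (hdvd i)
    _ = Nat.card (pTorsion p G) := by
        rw [← card_pTorsion_pi, card_pTorsion_congr (f.trans (DirectSum.addEquivProd _))]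

end Rank

section Coordinates

variable {ι M : Type*} [AddCommGroup M]

variable (M) in
/-- `(vanishingOn M T).relIndex W` is the number of restrictions to `T` of elements of `W`. -/
def vanishingOn (T : Finset ι) : AddSubgroup (ι → M) :=
  ⨅ i : T, (Pi.evalAddMonoidHom (fun _ => M) (i : ι)).ker

theorem mem_vanishingOn {T : Finset ι} {x : ι → M} :
    x ∈ vanishingOn M T ↔ ∀ i ∈ T, x i = 0 := by
  simp [vanishingOn, AddSubgroup.mem_iInf]

theorem vanishingOn_empty : vanishingOn M (∅ : Finset ι) = ⊤ := by
  ext x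
  simp [mem_vanishingOn]

theorem vanishingOn_union [DecidableEq ι] (S T : Finset ι) :
    vanishingOn M (S ∪ T) = vanishingOn M S ⊓ vanishingOn M T := by
  ext x
  simp only [AddSubgroup.mem_inf, mem_vanishingOn, Finset.mem_union]
  grind

theorem vanishingOn_insert [DecidableEq ι] (i : ι) (T : Finset ι) :
    vanishingOn M (insert i T) = (Pi.evalAddMonoidHom (fun _ => M) i).ker ⊓ vanishingOn M T := by
  ext x
  simp [mem_vanishingOn]

variable {p n : ℕ} [NeZero n] {W : AddSubgroup (ι → ZMod n)}

theorem relIndex_vanishingOn_le (hp : 0 < p) (hW : W ≤ pTorsion p _) (T : Finset ι) :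
    (vanishingOn (ZMod n) T).relIndex W ≤ p ^ T.card := by
  calc (vanishingOn (ZMod n) T).relIndex W
      ≤ ∏ i : T, (Pi.evalAddMonoidHom (fun _ => ZMod n) (i : ι)).ker.relIndex W :=
        AddSubgroup.relIndex_iInf_le _
    _ ≤ ∏ _i : T, p := Finset.prod_le_prod' fun i _ => by
        rw [AddSubgroup.relIndex_ker]
        exact (AddSubgroup.card_le_of_le ((AddSubgroup.map_mono hW).trans
          (map_pTorsion_le _))).trans (card_pTorsion_zmod_le hp)
    _ = p ^ T.card := by simp

theorem pow_card_le_relIndex_vanishingOn_of_subset (hp : 0 < p) (hW : W ≤ pTorsion p _)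
    [DecidableEq ι] {I T : Finset ι} (hTI : T ⊆ I)
    (hI : p ^ I.card ≤ (vanishingOn (ZMod n) I).relIndex W) :
    p ^ T.card ≤ (vanishingOn (ZMod n) T).relIndex W := by
  refine le_of_mul_le_mul_right ?_ (pow_pos hp (I \ T).card)
  calc p ^ T.card * p ^ (I \ T).card = p ^ I.card := by
        rw [← pow_add, add_comm, Finset.card_sdiff_add_card_eq_card hTI]
    _ ≤ (vanishingOn (ZMod n) I).relIndex W := hI
    _ = (vanishingOn (ZMod n) T ⊓ vanishingOn (ZMod n) (I \ T)).relIndex W := by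
        rw [← vanishingOn_union, Finset.union_sdiff_of_subset hTI]
    _ ≤ (vanishingOn (ZMod n) T).relIndex W * (vanishingOn (ZMod n) (I \ T)).relIndex W :=
        AddSubgroup.relIndex_inf_le
    _ ≤ (vanishingOn (ZMod n) T).relIndex W * p ^ (I \ T).card := by
        gcongr
        exact relIndex_vanishingOn_le hp hW _

theorem exists_card_eq_pow_le_relIndex_vanishingOn [Finite ι] (hp : p.Prime)
    (hW : W ≤ pTorsion p _) {r : ℕ} (hr : p ^ r ≤ Nat.card W) :
    ∃ I : Finset ι, I.card = r ∧ p ^ r ≤ (vanishingOn (ZMod n) I).relIndex W := by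
  classical
  induction r with
  | zero => exact ⟨∅, rfl, by simp [vanishingOn_empty]⟩
  | succ j ih =>
    obtain ⟨I, hIcard, hI⟩ := ih ((Nat.pow_le_pow_right hp.pos j.le_succ).trans hr)
    set K := vanishingOn (ZMod n) I
    have hKW : Nat.card ↥(K ⊓ W) * K.relIndex W = Nat.card W := by
      simpa using AddSubgroup.relIndex_inf_mul_relIndex ⊥ K W
    -- `W` has more than `p ^ j` elements but at most `p ^ j` restrictions to `I`.
    have hK : 1 < Nat.card ↥(K ⊓ W) := by
      by_contra! h
      have hle : K.relIndex W ≤ p ^ j := hIcard ▸ relIndex_vanishingOn_le hp.pos hW I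
      have : Nat.card W ≤ p ^ j := hKW ▸ (Nat.mul_le_mul h hle).trans_eq (one_mul _)
      exact (hr.trans this).not_gt (Nat.pow_lt_pow_right hp.one_lt j.lt_succ_self)
    obtain ⟨⟨u, hu⟩, hu0⟩ := (AddSubgroup.ne_bot_iff_exists_ne_zero).1
      ((AddSubgroup.one_lt_card_iff_ne_bot _).1 hK)
    obtain ⟨i, hi⟩ := Function.ne_iff.1 (fun h => hu0 (Subtype.ext h))
    have hiI : i ∉ I := fun h => hi (mem_vanishingOn.1 (AddSubgroup.mem_inf.1 hu).1 i h)
    refine ⟨insert i I, by rw [Finset.card_insert_of_notMem hiI, hIcard], ?_⟩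
    have hstep : p ≤ (Pi.evalAddMonoidHom (fun _ => ZMod n) i).ker.relIndex (K ⊓ W) := by
      rw [AddSubgroup.relIndex_ker]
      refine hp.le_card_of_mem_of_nsmul_eq_zero (AddSubgroup.mem_map_of_mem _ hu) hi ?_
      exact congrFun (hW (AddSubgroup.mem_inf.1 hu).2) i
    rw [vanishingOn_insert, ← AddSubgroup.relIndex_inf_mul_relIndex, pow_succ']
    exact Nat.mul_le_mul hstep hI

end Coordinates

section BinarySolutions

theorem exists_finset_card_eq_linearIndepOn {K V ι : Type*} [DivisionRing K] [AddCommGroup V]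
    [Module K V] [Finite ι] (z : ι → V) (hz : Submodule.span K (Set.range z) = ⊤) {d : ℕ}
    (hd : d ≤ Module.finrank K V) : ∃ J : Finset ι, J.card = d ∧ LinearIndepOn K z J := by
  classical
  have := Fintype.ofFinite ι
  obtain ⟨b, -, -, hzb, hb⟩ :=
    exists_linearIndepOn_extension (linearIndepOn_empty K z) (Set.empty_subset Set.univ)
  have hspan : Submodule.span K (Set.range fun i : b => z i) = ⊤ := by
    rw [← Set.image_eq_range, eq_top_iff, ← hz, Set.image_univ.symm]
    exact Submodule.span_le.2 hzb
  have hcard : Module.finrank K V = b.toFinset.card := by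
    rw [Set.toFinset_card, ← finrank_span_eq_card hb, hspan, finrank_top]
  obtain ⟨J, hJb, hJ⟩ := Finset.exists_subset_card_eq (hcard ▸ hd)
  exact ⟨J, hJ, hb.mono fun j hj => Set.mem_toFinset.1 (hJb hj)⟩

theorem eq_of_sum_nsmul_eq_of_linearIndepOn {p : ℕ} (hp : 2 ≤ p) {Q κ : Type*} [AddCommGroup Q]
    [Module (ZMod p) Q] [Fintype κ] {z : κ → Q} {J : Finset κ} (hJ : LinearIndepOn (ZMod p) z J)
    {w w' : κ → Fin 2} (hsum : ∑ j, (w j : ℕ) • z j = ∑ j, (w' j : ℕ) • z j)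
    (hoff : ∀ j ∉ J, w j = w' j) : w = w' := by
  classical
  simp_rw [← Nat.cast_smul_eq_nsmul (ZMod p)] at hsum
  have hJsum : ∑ j ∈ J, ((w j : ℕ) : ZMod p) • z j = ∑ j ∈ J, ((w' j : ℕ) : ZMod p) • z j := by
    have hoffsum : ∑ j ∈ Jᶜ, ((w j : ℕ) : ZMod p) • z j = ∑ j ∈ Jᶜ, ((w' j : ℕ) : ZMod p) • z j :=
      Finset.sum_congr rfl fun j hj => by rw [hoff j (Finset.mem_compl.1 hj)]
    rw [← Finset.sum_add_sum_compl J, ← Finset.sum_add_sum_compl J (fun j => _ • z j),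
      hoffsum] at hsum
    exact add_right_cancel hsum
  funext j
  by_cases hj : j ∈ J
  · have h := linearIndepOn_finset_iffₛ.1 hJ _ _ hJsum j hj
    rw [ZMod.natCast_eq_natCast_iff', Nat.mod_eq_of_lt (by omega), Nat.mod_eq_of_lt (by omega)] at h
    exact Fin.ext h
  · exact hoff j hj

theorem card_mul_pow_card_le_of_eqOn_compl {κ α : Type*} [Fintype κ] [Fintype α]
    [DecidableEq κ] {S : Set (κ → α)} (J : Finset κ)
    (hS : ∀ w ∈ S, ∀ w' ∈ S, (∀ j ∉ J, w j = w' j) → w = w') :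
    Nat.card S * Fintype.card α ^ J.card ≤ Fintype.card α ^ Fintype.card κ := by
  have hinj : Function.Injective fun (w : S) (j : (Jᶜ : Finset κ)) => (w : κ → α) j :=
    fun w w' h => Subtype.ext <| hS w w.2 w' w'.2 fun j hj =>
      congrFun h ⟨j, Finset.mem_compl.2 hj⟩
  calc Nat.card S * Fintype.card α ^ J.card
      ≤ Fintype.card α ^ Jᶜ.card * Fintype.card α ^ J.card := by
        gcongr
        simpa [Finset.card_compl] using Nat.card_le_card_of_injective _ hinj
    _ = Fintype.card α ^ Fintype.card κ := by rw [← pow_add, Finset.card_compl_add_card]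

variable {p d : ℕ} {κ : Type*} [Fintype κ]

theorem Nat.Prime.exists_finset_card_eq_forall_eq_of_sum_nsmul_eq (hp : p.Prime) {G : Type*}
    [AddCommGroup G] [Finite G] {y : κ → G} (hy : AddSubgroup.closure (Set.range y) = ⊤)
    (hd : p ^ d ≤ Nat.card (pTorsion p G)) :
    ∃ J : Finset κ, J.card = d ∧ ∀ w w' : κ → Fin 2,
      ∑ j, (w j : ℕ) • y j = ∑ j, (w' j : ℕ) • y j → (∀ j ∉ J, w j = w' j) → w = w' := by
  have := Fact.mk hp
  let P := (nsmulAddMonoidHom (α := G) p).range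
  let : Module (ZMod p) (G ⧸ P) := by exact QuotientAddGroup.zmodModule fun x => ⟨x, rfl⟩
  let z : κ → G ⧸ P := fun j => (y j : G ⧸ P)
  have hz : Submodule.span (ZMod p) (Set.range z) = ⊤ := by
    have hcl : AddSubgroup.closure (Set.range z) = ⊤ := by
      rw [show Set.range z = QuotientAddGroup.mk' P '' Set.range y from Set.range_comp _ _,
        ← AddMonoidHom.map_closure, hy,
        AddSubgroup.map_top_of_surjective _ (QuotientAddGroup.mk'_surjective P)]
    refine eq_top_iff.2 fun q _ => AddSubgroup.closure_le
      (K := (Submodule.span (ZMod p) (Set.range z)).toAddSubgroup) |>.2 Submodule.subset_span ?_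
    exact hcl ▸ AddSubgroup.mem_top q
  -- `|G ⧸ pG| = |G[p]|`, the cokernel and kernel of `x ↦ p • x`.
  have hfin : d ≤ Module.finrank (ZMod p) (G ⧸ P) := by
    have hcard : Nat.card (G ⧸ P) = p ^ Module.finrank (ZMod p) (G ⧸ P) := by
      rw [Module.natCard_eq_pow_finrank (K := ZMod p), Nat.card_zmod]
    rw [← Nat.pow_le_pow_iff_right hp.one_lt, ← hcard]
    exact hd.trans_eq AddSubgroup.index_range.symm
  obtain ⟨J, hJ, hind⟩ := exists_finset_card_eq_linearIndepOn z hz hfin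
  refine ⟨J, hJ, fun w w' hsum hoff => eq_of_sum_nsmul_eq_of_linearIndepOn hp.two_le hind ?_ hoff⟩
  simpa only [z, ← QuotientAddGroup.mk_nsmul, ← QuotientAddGroup.mk_sum] using
    congrArg (QuotientAddGroup.mk (s := P)) hsum

theorem Nat.Prime.card_setOf_sum_nsmul_eq_mul_two_pow_le (hp : p.Prime) {N : Type*} [AddCommGroup N]
    [Finite N] (y : κ → N) {U : AddSubgroup N} (hUy : U ≤ AddSubgroup.closure (Set.range y))
    (hUp : U ≤ pTorsion p N) (hU : p ^ d ≤ Nat.card U) (b : N) :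
    Nat.card {w : κ → Fin 2 | ∑ j, (w j : ℕ) • y j = b} * 2 ^ d ≤ 2 ^ Fintype.card κ := by
  classical
  set G := AddSubgroup.closure (Set.range y)
  let yG : κ → G := fun j => ⟨y j, AddSubgroup.subset_closure (Set.mem_range_self j)⟩
  have hyG : AddSubgroup.closure (Set.range yG) = ⊤ := by
    rw [← AddSubgroup.closure_closure_coe_preimage (k := Set.range y)]
    congr 1
    ext x
    simp [yG, Subtype.ext_iff]
  have hd : p ^ d ≤ Nat.card (pTorsion p G) := hU.trans <| by
    rw [← Nat.card_congr (AddSubgroup.addSubgroupOfEquivOfLe hUy).toEquiv]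
    exact AddSubgroup.card_le_of_le fun x hx => Subtype.ext (hUp hx)
  obtain ⟨J, rfl, hJ⟩ := hp.exists_finset_card_eq_forall_eq_of_sum_nsmul_eq hyG hd
  simpa using card_mul_pow_card_le_of_eqOn_compl
    (S := {w : κ → Fin 2 | ∑ j, (w j : ℕ) • y j = b}) J fun w hw w' hw' hoff =>
    hJ w w' (Subtype.ext (by simpa [yG] using hw.trans hw'.symm)) hoff

end BinarySolutions

theorem card_setOf_card_support_le_choose_mul {X ι M : Type*} [Finite X] [Fintype ι]
    [DecidableEq ι] [Zero M] [DecidableEq M] (f : X → ι → M) {I : Finset ι} {m : ℕ} {B : ℝ}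
    (hm : m ≤ I.card)
    (hB : ∀ S ⊆ I, S.card = m → (Nat.card {x | ∀ i ∈ I \ S, f x i = 0} : ℝ) ≤ B) :
    (Nat.card {x | #{i | f x i ≠ 0} ≤ m} : ℝ) ≤ I.card.choose m * B := by
  have hcover : {x | #{i | f x i ≠ 0} ≤ m} ⊆
      ⋃ S ∈ I.powersetCard m, {x | ∀ i ∈ I \ S, f x i = 0} := by
    intro x hx
    obtain ⟨S, hsS, hSI, hS⟩ := Finset.exists_subsuperset_card_eq
      (Finset.inter_subset_right (s₁ := {i | f x i ≠ 0}) (s₂ := I))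
      ((Finset.card_le_card Finset.inter_subset_left).trans hx) hm
    refine Set.mem_biUnion (Finset.mem_powersetCard.2 ⟨hSI, hS⟩) fun i hi => ?_
    by_contra h
    obtain ⟨hiI, hiS⟩ := Finset.mem_sdiff.1 hi
    exact hiS (hsS (Finset.mem_inter.2 ⟨by simpa using h, hiI⟩))
  simp only [Nat.card_coe_set_eq] at hB ⊢
  calc (Set.ncard {x | #{i | f x i ≠ 0} ≤ m} : ℝ)
      ≤ ∑ S ∈ I.powersetCard m, (Set.ncard {x | ∀ i ∈ I \ S, f x i = 0} : ℝ) := by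
        rw [← Nat.cast_sum]
        exact_mod_cast (Set.ncard_le_ncard hcover (Set.toFinite _)).trans
          (Finset.set_ncard_biUnion_le _ _)
    _ ≤ ∑ _S ∈ I.powersetCard m, B := Finset.sum_le_sum fun S hS =>
        hB S (Finset.mem_powersetCard.1 hS).1 (Finset.mem_powersetCard.1 hS).2
    _ = I.card.choose m * B := by rw [Finset.sum_const, Finset.card_powersetCard, nsmul_eq_mul]

open Matrix in
theorem Matrix.mulVec_natCast_eq_sum_nsmul {R m n : Type*} [NonAssocSemiring R] [Fintype n]
    (A : Matrix m n R) (w : n → ℕ) : A *ᵥ (fun j => (w j : R)) = ∑ j, w j • fun i => A i j := by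
  ext i
  simp [Matrix.mulVec, dotProduct, Finset.sum_apply, nsmul_eq_mul, Nat.cast_comm]

section LowWeight

open Matrix

variable {p n l k : ℕ} [NeZero n] (A : Matrix (Fin l) (Fin k) (ZMod n)) (v : Fin l → ZMod n)

theorem Nat.Prime.card_setOf_vanishingOn_mul_two_pow_le (hp : p.Prime)
    {W : AddSubgroup (Fin l → ZMod n)} (hWA : W ≤ colSpan A) (hWp : W ≤ pTorsion p _)
    {T : Finset (Fin l)} (hT : p ^ T.card ≤ (vanishingOn (ZMod n) T).relIndex W) :
    Nat.card {w : Fin k → Fin 2 | ∀ i ∈ T, (v + A *ᵥ fun j => ((w j : ℕ) : ZMod n)) i = 0}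
      * 2 ^ T.card ≤ 2 ^ k := by
  let π := QuotientAddGroup.mk' (vanishingOn (ZMod n) T)
  have hset : {w : Fin k → Fin 2 | ∀ i ∈ T, (v + A *ᵥ fun j => ((w j : ℕ) : ZMod n)) i = 0} =
      {w | ∑ j, (w j : ℕ) • π (fun i => A i j) = π (-v)} := by
    ext w
    have hsum : ∑ j, (w j : ℕ) • π (fun i => A i j) = π (A *ᵥ fun j => ((w j : ℕ) : ZMod n)) := by
      simp only [A.mulVec_natCast_eq_sum_nsmul, map_sum, map_nsmul]
    rw [Set.mem_ofPred_eq, Set.mem_ofPred_eq, hsum, QuotientAddGroup.mk'_apply,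
      QuotientAddGroup.mk'_apply, QuotientAddGroup.eq, ← neg_add, neg_mem_iff, add_comm,
      mem_vanishingOn]
  have hU : W.map π ≤ AddSubgroup.closure (Set.range fun j => π fun i => A i j) := by
    rw [Set.range_comp', ← AddMonoidHom.map_closure]
    exact AddSubgroup.map_mono hWA
  have hcard : p ^ T.card ≤ Nat.card (W.map π) := by
    rwa [← AddSubgroup.relIndex_ker, QuotientAddGroup.ker_mk']
  have := hp.card_setOf_sum_nsmul_eq_mul_two_pow_le _ hU
    ((AddSubgroup.map_mono hWp).trans (map_pTorsion_le π)) hcard (π (-v))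
  rwa [← hset, Fintype.card_fin] at this

end LowWeight

open Matrix in
theorem Nat.Prime.exists_card_eq_forall_subset_card_mul_two_pow_le {p α l k r : ℕ} (hp : p.Prime)
    (A : Matrix (Fin l) (Fin k) (ZMod (p ^ α))) (v : Fin l → ZMod (p ^ α))
    (hr : matrixRank A = r) :
    ∃ I : Finset (Fin l), I.card = r ∧ ∀ T ⊆ I,
      Nat.card {w : Fin k → Fin 2 | ∀ i ∈ T, (v + A *ᵥ fun j => ((w j : ℕ) : ZMod (p ^ α))) i = 0}
        * 2 ^ T.card ≤ 2 ^ k := by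
  have : NeZero (p ^ α) := ⟨pow_ne_zero α hp.ne_zero⟩
  let H := colSpan A
  let W := (pTorsion p H).map H.subtype
  have hWp : W ≤ pTorsion p _ := map_pTorsion_le _
  have hW : p ^ r ≤ Nat.card W := by
    rw [AddSubgroup.card_map_of_injective H.subtype_injective, ← hr]
    refine hp.pow_groupRank_le_card_pTorsion (e := α) fun x => Subtype.ext <| funext fun i => ?_
    simp only [AddSubgroup.coe_nsmul, Pi.smul_apply, nsmul_eq_mul, ZMod.natCast_self, zero_mul,
      AddSubgroup.coe_zero, Pi.zero_apply]
  obtain ⟨I, hI, hIW⟩ := exists_card_eq_pow_le_relIndex_vanishingOn hp hWp hW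
  exact ⟨I, hI, fun T hT => hp.card_setOf_vanishingOn_mul_two_pow_le A v
    (AddSubgroup.map_subtype_le _) hWp
    (pow_card_le_relIndex_vanishingOn_of_subset hp.pos hWp hT (hI ▸ hIW))⟩

open Matrix in
theorem Nat.Prime.card_setOf_card_support_le {p α l k r m : ℕ} (hp : p.Prime)
    (A : Matrix (Fin l) (Fin k) (ZMod (p ^ α))) (v : Fin l → ZMod (p ^ α))
    (hr : matrixRank A = r) (hm : m ≤ r) :
    (Nat.card {w : Fin k → Fin 2 |
      #{i | (v + A *ᵥ fun j => ((w j : ℕ) : ZMod (p ^ α))) i ≠ 0} ≤ m} : ℝ)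
      ≤ r.choose m * (2 ^ k / 2 ^ (r - m)) := by
  obtain ⟨I, hI, hvanish⟩ := hp.exists_card_eq_forall_subset_card_mul_two_pow_le A v hr
  have hB : ∀ S ⊆ I, S.card = m → (Nat.card {w : Fin k → Fin 2 |
      ∀ i ∈ I \ S, (v + A *ᵥ fun j => ((w j : ℕ) : ZMod (p ^ α))) i = 0} : ℝ)
      ≤ 2 ^ k / 2 ^ (r - m) := fun S hSI hS => by
    have := hvanish (I \ S) Finset.sdiff_subset
    rw [Finset.card_sdiff_of_subset hSI, hI, hS] at this
    rw [le_div_iff₀ (by positivity)]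
    exact_mod_cast this
  simpa only [hI] using card_setOf_card_support_le_choose_mul _ (hI ▸ hm) hB

open Matrix in
theorem low_weight_probability_bound_general (p α l k r : ℕ) (hp : p.Prime)
    (A : Matrix (Fin l) (Fin k) (ZMod (p ^ α))) (hr : matrixRank A = r)
    (v : Fin l → ZMod (p ^ α)) (t : ℝ) (ht0 : 0 ≤ t) (ht1 : t ≤ 1) :
    (Nat.card {w : Fin k → Fin 2 |
        ((Finset.univ.filter fun i : Fin l =>
          (v + A.mulVec fun j => ((w j : ℕ) : ZMod (p ^ α))) i ≠ 0).card : ℝ) ≤ t * r} : ℝ)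
        / 2 ^ k
      ≤ (r.choose ⌊t * r⌋₊ : ℝ) * 2 ^ (t * r) / 2 ^ r := by
  have htr : 0 ≤ t * r := by positivity
  set m := ⌊t * r⌋₊
  have hmr : m ≤ r := Nat.floor_le_of_le (mul_le_of_le_one_left (Nat.cast_nonneg r) ht1)
  simp_rw [← Nat.le_floor_iff htr]
  calc _ ≤ (r.choose m : ℝ) * (2 ^ k / 2 ^ (r - m)) / 2 ^ k := by
        gcongr
        exact hp.card_setOf_card_support_le A v hr hmr
    _ = (r.choose m : ℝ) * (2 : ℝ) ^ (m : ℝ) / 2 ^ r := by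
        rw [Real.rpow_natCast, ← pow_sub_mul_pow 2 hmr]
        field_simp
    _ ≤ r.choose m * 2 ^ (t * r) / 2 ^ r := by
        gcongr
        exacts [one_le_two, Nat.floor_le htr]

open Matrix in
theorem low_weight_probability_bound (p α l k r : ℕ) (hp : p.Prime) (hα : 0 < α)
    (A : Matrix (Fin l) (Fin k) (ZMod (p ^ α))) (hr : matrixRank A = r)
    (v : Fin l → ZMod (p ^ α)) (t : ℝ) (ht0 : 0 ≤ t) (ht1 : t ≤ 1) :
    (Nat.card {w : Fin k → Fin 2 |
        ((Finset.univ.filter fun i : Fin l =>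
          (v + A.mulVec fun j => ((w j : ℕ) : ZMod (p ^ α))) i ≠ 0).card : ℝ) ≤ t * r} : ℝ)
        / 2 ^ k
      ≤ (r.choose ⌊t * r⌋₊ : ℝ) * 2 ^ (t * r) / 2 ^ r :=
  low_weight_probability_bound_general p α l k r hp A hr v t ht0 ht1
end
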